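/- arXiv:1310.2282 — 5 statements merged into one kernel-verified Lean document; each statement's English description precedes it below -/
import Mathlib

section
/- Let u : ℤ × ℤ → ℝ satisfy u(i+1,j+1)·u(i,j) = (u(i+1,j) - 1)·(u(i,j+1) - 1) for all i,j, and assume u(i,j) ≠ 0 and u(i+1,j) ≠ 1 for all i,j. Then the function J(i,j) = (u(i,j+2)/(u(i,j+1) - 1) + 1)·((u(i,j) - 1)/u(i,j+1) + 1) satisfies J(i+1,j) = J(i,j) for all i,j, provided additionally u(i,j+1) ≠ 0 and u(i,j+1) ≠ 1 for all i,j. -/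
/-!
Read on the cells `(i, j)` and `(i, j+1)`, the Liouville equation turns both factors of
`J(i+1, j)` into expressions in `u(i, ·)` only, giving
`J(i+1, j) = ((u(i,j+2) - 1)/u(i,j+1) + 1) (u(i,j)/(u(i,j+1) - 1) + 1)`.
This and `J(i, j)` are two ways of splitting the same product
`(u(i,j) + u(i,j+1) - 1) (u(i,j+1) + u(i,j+2) - 1) / (u(i,j+1) (u(i,j+1) - 1))`.
-/

section Field

variable {K : Type*} [Field K] {a b c d : K}

-- `a, b, c, d` stand for `u(i,j), u(i+1,j), u(i,j+1), u(i+1,j+1)` on one cell.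

theorem sub_one_div_eq_div_sub_one_of_liouville (h : d * a = (b - 1) * (c - 1))
    (hd : d ≠ 0) (hc : c ≠ 1) : (b - 1) / d = a / (c - 1) := by
  rw [div_eq_div_iff hd (sub_ne_zero.mpr hc)]
  linear_combination -h

theorem div_sub_one_eq_sub_one_div_of_liouville (h : d * a = (b - 1) * (c - 1))
    (hb : b ≠ 1) (ha : a ≠ 0) : d / (b - 1) = (c - 1) / a := by
  rw [div_eq_div_iff (sub_ne_zero.mpr hb) ha]
  linear_combination h

theorem sub_one_div_add_one_mul_div_sub_one_add_one (x y z : K) (hy₀ : y ≠ 0) (hy₁ : y ≠ 1) :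
    ((z - 1) / y + 1) * (x / (y - 1) + 1) = (z / (y - 1) + 1) * ((x - 1) / y + 1) := by
  have : y - 1 ≠ 0 := sub_ne_zero.mpr hy₁
  field_simp
  ring

end Field

theorem stmt_1_general (u : ℤ × ℤ → ℝ)
    (heq : ∀ i j : ℤ, u (i+1, j+1) * u (i, j) = (u (i+1, j) - 1) * (u (i, j+1) - 1))
    (h2 : ∀ i j : ℤ, u (i, j+1) ≠ 0)
    (h3 : ∀ i j : ℤ, u (i, j+1) ≠ 1) :
    ∀ i j : ℤ,
      (fun i j => (u (i, j+2) / (u (i, j+1) - 1) + 1) * ((u (i, j) - 1) / u (i, j+1) + 1))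
        (i+1) j =
      (fun i j => (u (i, j+2) / (u (i, j+1) - 1) + 1) * ((u (i, j) - 1) / u (i, j+1) + 1))
        i j := by
  intro i j
  have upper : u (i+1, j+2) / (u (i+1, j+1) - 1) = (u (i, j+2) - 1) / u (i, j+1) :=
    div_sub_one_eq_sub_one_div_of_liouville (by simpa [add_assoc] using heq i (j+1))
      (h3 (i+1) j) (h2 i j)
  have lower : (u (i+1, j) - 1) / u (i+1, j+1) = u (i, j) / (u (i, j+1) - 1) :=
    sub_one_div_eq_div_sub_one_of_liouville (heq i j) (h2 (i+1) j) (h3 i j)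
  simp only [upper, lower]
  exact sub_one_div_add_one_mul_div_sub_one_add_one _ _ _ (h2 i j) (h3 i j)

theorem stmt_1 (u : ℤ × ℤ → ℝ)
    (heq : ∀ i j : ℤ, u (i+1, j+1) * u (i, j) = (u (i+1, j) - 1) * (u (i, j+1) - 1))
    (h0 : ∀ i j : ℤ, u (i, j) ≠ 0)
    (h1 : ∀ i j : ℤ, u (i+1, j) ≠ 1)
    (h2 : ∀ i j : ℤ, u (i, j+1) ≠ 0)
    (h3 : ∀ i j : ℤ, u (i, j+1) ≠ 1) :
    ∀ i j : ℤ,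
      (fun i j => (u (i, j+2) / (u (i, j+1) - 1) + 1) * ((u (i, j) - 1) / u (i, j+1) + 1))
        (i+1) j =
      (fun i j => (u (i, j+2) / (u (i, j+1) - 1) + 1) * ((u (i, j) - 1) / u (i, j+1) + 1))
        i j :=
  stmt_1_general u heq h2 h3
end

section
/- Let u : ℤ × ℤ → ℝ satisfy u(i+1,j+1)·(u(i,j) + 1) = u(i,j+1)·(u(i+1,j) + 1) for all i,j, with u(i,j+1) ≠ 0 for all i,j. Then φ(i,j) = (u(i,j) + 1)/u(i,j+1) satisfies φ(i+1,j) = φ(i,j) for all i,j; that is, φ is a first-order j-integral of the equation. -/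
theorem stmt_3 (u : ℤ × ℤ → ℝ)
    (heq : ∀ i j : ℤ, u (i+1, j+1) * (u (i, j) + 1) = u (i, j+1) * (u (i+1, j) + 1))
    (h0 : ∀ i j : ℤ, u (i, j+1) ≠ 0) :
    ∀ i j : ℤ,
      (fun i j => (u (i, j) + 1) / u (i, j+1)) (i+1) j =
      (fun i j => (u (i, j) + 1) / u (i, j+1)) i j := by
  intro i j
  dsimp only
  rw [div_eq_div_iff (h0 (i+1) j) (h0 i j)]
  linear_combination -heq i j
end

section
/- Let u : ℤ × ℤ → ℝ satisfy u(i+1,j+1)·(u(i,j) + 1) = u(i,j+1)·(u(i+1,j) + 1) for all i,j, and assume u(i+1,j) ≠ u(i,j) and u(i,j+1) ≠ 0 and u(i,j) + 1 ≠ 0 for all i,j. Then I(i,j) = (u(i+2,j) - u(i+1,j))/(u(i+1,j) - u(i,j)) satisfies I(i,j+1) = I(i,j) for all i,j; that is, I is a second-order i-integral. -/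
/-!
Along a row `j`, the equation says that `u (i, j+1) / (u (i, j) + 1)` does not depend on `i`.
Calling this constant `c`, the next row is `u (·, j+1) = c * (u (·, j) + 1)`, so its `i`-differences
are those of row `j` scaled by `c ≠ 0`, and ratios of consecutive differences are unchanged.
-/

section QuadGraph

variable {K : Type*} [Field K] (u : ℤ × ℤ → K)
  (heq : ∀ i j : ℤ, u (i+1, j+1) * (u (i, j) + 1) = u (i, j+1) * (u (i+1, j) + 1))
  (h2 : ∀ i j : ℤ, u (i, j) + 1 ≠ 0)
include heq h2

theorem div_add_one_succ_eq (i j : ℤ) :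
    u (i+1, j+1) / (u (i+1, j) + 1) = u (i, j+1) / (u (i, j) + 1) := by
  rw [div_eq_div_iff (h2 (i+1) j) (h2 i j)]
  exact heq i j

theorem sub_succ_eq_div_mul_sub (i j : ℤ) :
    u (i+1, j+1) - u (i, j+1) = u (i, j+1) / (u (i, j) + 1) * (u (i+1, j) - u (i, j)) := by
  field_simp [h2 i j]
  linear_combination heq i j

end QuadGraph

theorem stmt_4_general (u : ℤ × ℤ → ℝ)
    (heq : ∀ i j : ℤ, u (i+1, j+1) * (u (i, j) + 1) = u (i, j+1) * (u (i+1, j) + 1))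
    (h1 : ∀ i j : ℤ, u (i, j+1) ≠ 0)
    (h2 : ∀ i j : ℤ, u (i, j) + 1 ≠ 0) :
    ∀ i j : ℤ,
      (fun i j => (u (i+2, j) - u (i+1, j)) / (u (i+1, j) - u (i, j))) i (j+1) =
      (fun i j => (u (i+2, j) - u (i+1, j)) / (u (i+1, j) - u (i, j))) i j := by
  intro i j
  have hc : u (i, j+1) / (u (i, j) + 1) ≠ 0 := div_ne_zero (h1 i j) (h2 i j)
  have hstep := sub_succ_eq_div_mul_sub u heq h2
  have hnext := hstep (i+1) j
  rw [div_add_one_succ_eq u heq h2, show i + 1 + 1 = i + 2 by ring] at hnext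
  simp only [hnext, hstep i j, mul_div_mul_left _ _ hc]

theorem stmt_4 (u : ℤ × ℤ → ℝ)
    (heq : ∀ i j : ℤ, u (i+1, j+1) * (u (i, j) + 1) = u (i, j+1) * (u (i+1, j) + 1))
    (h0 : ∀ i j : ℤ, u (i+1, j) ≠ u (i, j))
    (h1 : ∀ i j : ℤ, u (i, j+1) ≠ 0)
    (h2 : ∀ i j : ℤ, u (i, j) + 1 ≠ 0) :
    ∀ i j : ℤ,
      (fun i j => (u (i+2, j) - u (i+1, j)) / (u (i+1, j) - u (i, j))) i (j+1) =
      (fun i j => (u (i+2, j) - u (i+1, j)) / (u (i+1, j) - u (i, j))) i j :=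
  stmt_4_general u heq h1 h2
end

section
/- Let u : ℤ × ℤ → ℝ, let ζ : ℝ → ℝ, and let φ : ℤ × ℤ → ℝ, α, β, γ : ℝ → ℝ be such that: (a) φ(i+1,j) = φ(i,j) for all i,j (φ is a j-integral); (b) ζ(u(i,j+1)) = α(φ(i,j)) + β(φ(i,j))/(γ(φ(i,j)) - ζ(u(i,j))) for all i,j, with γ(φ(i,j)) - ζ(u(i,j)) ≠ 0. Assume also that ζ(u(i+3,j)) ≠ ζ(u(i+2,j)), ζ(u(i+1,j)) ≠ ζ(u(i,j)), ζ(u(i+3,j+1)) ≠ ζ(u(i+2,j+1)), and ζ(u(i+1,j+1)) ≠ ζ(u(i,j+1)) for all i,j, and β(φ(i,j)) ≠ 0. Then I(i,j) = ((ζ(u(i+3,j)) - ζ(u(i+1,j)))·(ζ(u(i+2,j)) - ζ(u(i,j))))/((ζ(u(i+3,j)) - ζ(u(i+2,j)))·(ζ(u(i+1,j)) - ζ(u(i,j)))) satisfies I(i,j+1) = I(i,j) for all i,j. -/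
/-!
The equation `ζ(u_{i,j+1}) = α(φ) + β(φ) / (γ(φ) - ζ(u_{i,j}))` says that passing from row `j` to
row `j + 1` applies to `ζ ∘ u` a Möbius map whose coefficients depend only on the `j`-integral `φ`,
hence are the same along the whole row. A Möbius map `z ↦ a + b / (g - z)` with `b ≠ 0` multiplies
every difference `z - w` by `b / ((g - z) (g - w))`, so these factors cancel in the cross-ratio of
four consecutive values, which is therefore an `i`-integral.
-/

section Mobius

variable {K : Type*} [Field K]

def mobius (a b g z : K) : K := a + b / (g - z)

def crossRatio (z₀ z₁ z₂ z₃ : K) : K :=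
  (z₃ - z₁) * (z₂ - z₀) / ((z₃ - z₂) * (z₁ - z₀))

theorem mobius_sub_mobius {a b g z w : K} (hz : g - z ≠ 0) (hw : g - w ≠ 0) :
    mobius a b g z - mobius a b g w = b / ((g - z) * (g - w)) * (z - w) := by
  unfold mobius
  field_simp
  ring

/-- No distinctness of the `zₖ` is needed: a vanishing denominator vanishes on both sides, which
then both take the junk value `0`. -/
theorem crossRatio_mobius {a b g z₀ z₁ z₂ z₃ : K} (hb : b ≠ 0)
    (h₀ : g - z₀ ≠ 0) (h₁ : g - z₁ ≠ 0) (h₂ : g - z₂ ≠ 0) (h₃ : g - z₃ ≠ 0) :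
    crossRatio (mobius a b g z₀) (mobius a b g z₁) (mobius a b g z₂) (mobius a b g z₃) =
      crossRatio z₀ z₁ z₂ z₃ := by
  unfold crossRatio
  rw [mobius_sub_mobius h₃ h₁, mobius_sub_mobius h₂ h₀, mobius_sub_mobius h₃ h₂,
    mobius_sub_mobius h₁ h₀]
  -- both products of differences acquire the same nonzero factor `b² / ∏ (g - zₖ)`
  have hfactor : b / ((g - z₃) * (g - z₁)) * (b / ((g - z₂) * (g - z₀))) =
      b / ((g - z₃) * (g - z₂)) * (b / ((g - z₁) * (g - z₀))) := by
    field_simp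
  have hfactor_ne : b / ((g - z₃) * (g - z₁)) * (b / ((g - z₂) * (g - z₀))) ≠ 0 := by
    simp [hb, h₀, h₁, h₂, h₃]
  rw [mul_mul_mul_comm, mul_mul_mul_comm _ (z₃ - z₂), ← hfactor,
    mul_div_mul_left _ _ hfactor_ne]

end Mobius

theorem stmt_7_general (u : ℤ × ℤ → ℝ) (ζ : ℝ → ℝ) (φ : ℤ × ℤ → ℝ) (α β γ : ℝ → ℝ)
    (hφ : ∀ i j : ℤ, φ (i+1, j) = φ (i, j))
    (hmob : ∀ i j : ℤ,
      ζ (u (i, j+1)) = α (φ (i, j)) + β (φ (i, j)) / (γ (φ (i, j)) - ζ (u (i, j))))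
    (hden : ∀ i j : ℤ, γ (φ (i, j)) - ζ (u (i, j)) ≠ 0)
    (hβ : ∀ i j : ℤ, β (φ (i, j)) ≠ 0) :
    ∀ i j : ℤ,
      (fun i j => ((ζ (u (i+3, j)) - ζ (u (i+1, j))) * (ζ (u (i+2, j)) - ζ (u (i, j)))) /
        ((ζ (u (i+3, j)) - ζ (u (i+2, j))) * (ζ (u (i+1, j)) - ζ (u (i, j))))) i (j+1) =
      (fun i j => ((ζ (u (i+3, j)) - ζ (u (i+1, j))) * (ζ (u (i+2, j)) - ζ (u (i, j)))) /
        ((ζ (u (i+3, j)) - ζ (u (i+2, j))) * (ζ (u (i+1, j)) - ζ (u (i, j))))) i j := by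
  intro i j
  have hrow (k : ℤ) : φ (i + k, j) = φ (i, j) := by
    simpa using (Function.Periodic.int_mul (f := fun i => φ (i, j)) (fun i => hφ i j) k) i
  have hnext (k : ℤ) : ζ (u (i + k, j + 1)) =
      mobius (α (φ (i, j))) (β (φ (i, j))) (γ (φ (i, j))) (ζ (u (i + k, j))) := by
    rw [hmob, hrow]
    rfl
  have hpole (k : ℤ) : γ (φ (i, j)) - ζ (u (i + k, j)) ≠ 0 := hrow k ▸ hden (i + k) j
  have key := crossRatio_mobius (a := α (φ (i, j))) (hβ i j) (hden i j) (hpole 1) (hpole 2)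
    (hpole 3)
  rwa [← hnext 1, ← hnext 2, ← hnext 3, mobius, ← hmob] at key

theorem stmt_7 (u : ℤ × ℤ → ℝ) (ζ : ℝ → ℝ) (φ : ℤ × ℤ → ℝ) (α β γ : ℝ → ℝ)
    (hφ : ∀ i j : ℤ, φ (i+1, j) = φ (i, j))
    (hmob : ∀ i j : ℤ,
      ζ (u (i, j+1)) = α (φ (i, j)) + β (φ (i, j)) / (γ (φ (i, j)) - ζ (u (i, j))))
    (hden : ∀ i j : ℤ, γ (φ (i, j)) - ζ (u (i, j)) ≠ 0)
    (h32 : ∀ i j : ℤ, ζ (u (i+3, j)) ≠ ζ (u (i+2, j)))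
    (h10 : ∀ i j : ℤ, ζ (u (i+1, j)) ≠ ζ (u (i, j)))
    (h32' : ∀ i j : ℤ, ζ (u (i+3, j+1)) ≠ ζ (u (i+2, j+1)))
    (h10' : ∀ i j : ℤ, ζ (u (i+1, j+1)) ≠ ζ (u (i, j+1)))
    (hβ : ∀ i j : ℤ, β (φ (i, j)) ≠ 0) :
    ∀ i j : ℤ,
      (fun i j => ((ζ (u (i+3, j)) - ζ (u (i+1, j))) * (ζ (u (i+2, j)) - ζ (u (i, j)))) /
        ((ζ (u (i+3, j)) - ζ (u (i+2, j))) * (ζ (u (i+1, j)) - ζ (u (i, j))))) i (j+1) =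
      (fun i j => ((ζ (u (i+3, j)) - ζ (u (i+1, j))) * (ζ (u (i+2, j)) - ζ (u (i, j)))) /
        ((ζ (u (i+3, j)) - ζ (u (i+2, j))) * (ζ (u (i+1, j)) - ζ (u (i, j))))) i j :=
  stmt_7_general u ζ φ α β γ hφ hmob hden hβ
end

section
/- Let A, B, C, D, δ ∈ ℝ, and let u, v, w ∈ ℝ with v + Au + C - δB ≠ 0. Define u₁ = (u·v + δD)/(v + Au + C - δB) and suppose u₁ ≠ u and w = ((u + B)(δu₁ + C) - AD)/(u₁ - u). Then P₂u² + P₁u + P₀ = 0, where P₂ = δv + Aw + AC, P₁ = (C + δB)v + (C - δB)w + (BC - AD - δD)(A - δ) + C², and P₀ = (BC - AD)v - δD·w + BC(C - δB) + D(δAB - AC + δ²B). -/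
theorem sub_mul_quadratic_eq_zero {A B C D δ u v w u₁ : ℝ}
    (hu₁ : u₁ * (v + A * u + C - δ * B) = u * v + δ * D)
    (hw : w * (u₁ - u) = (u + B) * (δ * u₁ + C) - A * D) :
    (u₁ - u) * ((δ * v + A * w + A * C) * u ^ 2 +
      ((C + δ * B) * v + (C - δ * B) * w + (B * C - A * D - δ * D) * (A - δ) + C ^ 2) * u +
      ((B * C - A * D) * v - δ * D * w + B * C * (C - δ * B) +
        D * (δ * A * B - A * C + δ ^ 2 * B))) = 0 := by
  linear_combination (A * u ^ 2 + (C - δ * B) * u - δ * D) * hw +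
    (δ * u ^ 2 + C * u + B * δ * u + B * C - A * D) * hu₁

theorem stmt_11 (A B C D δ u v w : ℝ)
    (hden : v + A * u + C - δ * B ≠ 0)
    (u₁ : ℝ) (hu₁ : u₁ = (u * v + δ * D) / (v + A * u + C - δ * B))
    (hne : u₁ ≠ u)
    (hw : w = ((u + B) * (δ * u₁ + C) - A * D) / (u₁ - u)) :
    (δ * v + A * w + A * C) * u ^ 2 +
      ((C + δ * B) * v + (C - δ * B) * w + (B * C - A * D - δ * D) * (A - δ) + C ^ 2) * u +
      ((B * C - A * D) * v - δ * D * w + B * C * (C - δ * B) +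
        D * (δ * A * B - A * C + δ ^ 2 * B)) = 0 := by
  have hsub : u₁ - u ≠ 0 := sub_ne_zero.mpr hne
  refine (mul_eq_zero.mp (sub_mul_quadratic_eq_zero ?_ ?_)).resolve_left hsub
  · rw [hu₁, div_mul_cancel₀ _ hden]
  · rw [hw, div_mul_cancel₀ _ hsub]
end
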